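/- Let u, v : B₁ → ℝ be continuous nonnegative functions with Ω := {u > 0} = {v > 0}, and suppose the boundary condition (∂u/∂n)(∂v/∂n) = 1 holds on ∂Ω ∩ B₁ in the blow-up sense (Q ≡ 1). If φ ∈ C^∞(ℝ^d) and φ₊ touches the function x ↦ √(u(x)v(x)) from below at a point x₀ ∈ ∂Ω ∩ B₁, then |∇φ(x₀)| ≤ 1. -/

import Mathlib

open Metric Set Filter Topology RealInnerProductSpace

noncomputable section

/-- `Euc n` is the Euclidean space `ℝⁿ`. -/
abbrev Euc (n : ℕ) := EuclideanSpace ℝ (Fin n)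

/-- The Laplacian: sum of pure second partial derivatives. -/
def lap {n : ℕ} (u : Euc n → ℝ) (x : Euc n) : ℝ :=
  ∑ i : Fin n, fderiv ℝ (fun y => fderiv ℝ u y (EuclideanSpace.single i 1)) x
    (EuclideanSpace.single i 1)

/-- `u` is harmonic in the open set `Ω`: twice continuously differentiable with zero Laplacian. -/
def HarmonicOnSet {n : ℕ} (u : Euc n → ℝ) (Ω : Set (Euc n)) : Prop :=
  ContDiffOn ℝ 2 u Ω ∧ ∀ x ∈ Ω, lap u x = 0

/-- `Ω` admits a one-sided tangent ball at `x₀ ∈ ∂Ω`. -/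
def OneSidedTangentBall {n : ℕ} (Ω : Set (Euc n)) (x₀ : Euc n) : Prop :=
  ∃ r > 0, ∃ y₀ : Euc n,
    (ball y₀ r ⊆ Ω ∧ sphere y₀ r ∩ frontier Ω = {x₀}) ∨
    (ball y₀ r ⊆ (closure Ω)ᶜ ∧ sphere y₀ r ∩ frontier Ω = {x₀})

/-- The boundary condition `(∂u/∂n)(∂v/∂n) = Q` on `∂Ω ∩ B₁` in the blow-up sense:
at every boundary point admitting a one-sided tangent ball there are a decreasing sequence
`rₖ → 0`, constants `α, β > 0` with `αβ = Q x₀` and a unit vector `ν` such that the rescalings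
of `u` (resp. `v`) converge uniformly on `B₁` to `α(x·ν)₊` (resp. `β(x·ν)₊`). -/
def BlowUpBC {n : ℕ} (u v : Euc n → ℝ) (Ω : Set (Euc n)) (Q : Euc n → ℝ) : Prop :=
  ∀ x₀ ∈ frontier Ω ∩ ball (0 : Euc n) 1, OneSidedTangentBall Ω x₀ →
    ∃ r : ℕ → ℝ, StrictAnti r ∧ (∀ k, 0 < r k) ∧ Tendsto r atTop (𝓝 0) ∧
    ∃ α : ℝ, 0 < α ∧ ∃ β : ℝ, 0 < β ∧ α * β = Q x₀ ∧
    ∃ ν : Euc n, ‖ν‖ = 1 ∧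
      TendstoUniformlyOn (fun k x => u (x₀ + r k • x) / r k)
        (fun x => α * max ⟪x, ν⟫ 0) atTop (ball 0 1) ∧
      TendstoUniformlyOn (fun k x => v (x₀ + r k • x) / r k)
        (fun x => β * max ⟪x, ν⟫ 0) atTop (ball 0 1)

/-- `∂Ω` is `C^{1,θ}` in `s`: near every point of `∂Ω ∩ s`, `Ω` is the supergraph, in the
direction of a unit vector `e`, of a `C¹` function `g` on `e^⊥` with `θ`-Hölder gradient. -/
def C1HolderBoundaryIn {n : ℕ} (Ω : Set (Euc n)) (θ : NNReal) (s : Set (Euc n)) : Prop :=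
  ∀ x₀ ∈ frontier Ω ∩ s, ∃ ρ > 0, ∃ e : Euc n, ‖e‖ = 1 ∧
    ∃ g : (ℝ ∙ e)ᗮ → ℝ, ContDiff ℝ 1 g ∧
      (∃ Cg : NNReal, HolderWith Cg θ (fderiv ℝ g)) ∧
      Ω ∩ ball x₀ ρ =
        {x ∈ ball x₀ ρ | g ((Submodule.orthogonalProjectionOnto (ℝ ∙ e)ᗮ) (x - x₀)) < ⟪x - x₀, e⟫}

/-- The last coordinate `x_d` of a point. -/
def xd {n : ℕ} (x : Euc (n+1)) : ℝ := x (Fin.last n)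

/-- The last standard basis vector `e_d`. -/
def ed (n : ℕ) : Euc (n+1) := EuclideanSpace.single (Fin.last n) 1

/-- The graph of `w` over the set `A`, as a subset of `ℝ^d × ℝ = ℝ^{d+1}`. -/
def graphOver {n : ℕ} (w : Euc n → ℝ) (A : Set (Euc n)) : Set (Euc n × ℝ) :=
  (fun x => (x, w x)) '' A

lemma taylor_quad {F : Type*} [NormedAddCommGroup F] [NormedSpace ℝ F]
    (f : F → ℝ) (hf : ContDiff ℝ (⊤ : ℕ∞) f) (x₀ : F) :
    ∃ K : ℝ, 0 < K ∧ ∃ ρ : ℝ, 0 < ρ ∧ ∀ y ∈ closedBall x₀ ρ,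
      ‖f y - f x₀ - fderiv ℝ f x₀ (y - x₀)‖ ≤ K * ‖y - x₀‖ ^ 2 := by
  have h1 : ContDiff ℝ (⊤ : ℕ∞) (fderiv ℝ f) := hf.fderiv_right (by simp)
  obtain ⟨K, t, ht, hlip⟩ := (h1.contDiffAt.of_le (by simp) :
    ContDiffAt ℝ 1 (fderiv ℝ f) x₀).exists_lipschitzOnWith
  obtain ⟨ε, hε, hball⟩ := Metric.mem_nhds_iff.mp ht
  refine ⟨(K : ℝ) + 1, by positivity, ε / 2, by positivity, fun y hy => ?_⟩
  have hsub : closedBall x₀ (ε / 2) ⊆ t := fun z hz =>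
    hball (lt_of_le_of_lt (mem_closedBall.mp hz) (by linarith))
  set s : Set F := closedBall x₀ ‖y - x₀‖ with hs
  have hss : s ⊆ closedBall x₀ (ε / 2) :=
    closedBall_subset_closedBall (by rw [← dist_eq_norm]; exact mem_closedBall.mp hy)
  have hx₀s : x₀ ∈ s := mem_closedBall_self (norm_nonneg _)
  have hys : y ∈ s := by simp [hs, mem_closedBall, dist_eq_norm]
  have hbd : ∀ z ∈ s, ‖fderiv ℝ f z - fderiv ℝ f x₀‖ ≤ ((K : ℝ) + 1) * ‖y - x₀‖ := by
    intro z hz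
    have h2 := hlip.dist_le_mul z (hsub (hss hz)) x₀ (hsub (hss hx₀s))
    rw [dist_eq_norm] at h2
    have h3 : dist z x₀ ≤ ‖y - x₀‖ := mem_closedBall.mp hz
    calc ‖fderiv ℝ f z - fderiv ℝ f x₀‖ ≤ K * dist z x₀ := h2
      _ ≤ ((K : ℝ) + 1) * ‖y - x₀‖ := by
          have : (0:ℝ) ≤ K := K.2
          nlinarith [dist_nonneg (x := z) (y := x₀), norm_nonneg (y - x₀)]
  have := (convex_closedBall x₀ ‖y - x₀‖).norm_image_sub_le_of_norm_hasFDerivWithin_le'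
    (fun z _ => ((hf.differentiable (by simp)) z).hasFDerivAt.hasFDerivWithinAt)
    hbd hx₀s hys
  calc ‖f y - f x₀ - fderiv ℝ f x₀ (y - x₀)‖ ≤ ((K : ℝ) + 1) * ‖y - x₀‖ * ‖y - x₀‖ := this
    _ = ((K : ℝ) + 1) * ‖y - x₀‖ ^ 2 := by ring

set_option maxHeartbeats 2000000 in
/-- if `φ₊` touches `√(uv)` from below at a free boundary point,
then `|∇φ(x₀)| ≤ 1`. -/
theorem statement_3 (d : ℕ) (u v : Euc (d+2) → ℝ) (Ω : Set (Euc (d+2)))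
    (hu : ContinuousOn u (ball 0 1)) (hv : ContinuousOn v (ball 0 1))
    (hu0 : ∀ x ∈ ball (0 : Euc (d+2)) 1, 0 ≤ u x)
    (hv0 : ∀ x ∈ ball (0 : Euc (d+2)) 1, 0 ≤ v x)
    (hΩu : Ω = {x ∈ ball (0 : Euc (d+2)) 1 | 0 < u x})
    (hΩv : Ω = {x ∈ ball (0 : Euc (d+2)) 1 | 0 < v x})
    (hbc : BlowUpBC u v Ω (fun _ => 1))
    (φ : Euc (d+2) → ℝ) (hφ : ContDiff ℝ (⊤ : ℕ∞) φ)
    (x₀ : Euc (d+2)) (hx₀ : x₀ ∈ frontier Ω ∩ ball 0 1)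
    (htouch₁ : Real.sqrt (u x₀ * v x₀) = 0) (htouch₂ : φ x₀ = 0)
    (htouch₃ : ∀ᶠ x in 𝓝 x₀, max (φ x) 0 ≤ Real.sqrt (u x * v x)) :
    ‖gradient φ x₀‖ ≤ 1 := by
  set g := gradient φ x₀ with hgdef
  rcases eq_or_ne g 0 with h0 | h0
  · rw [h0]; simp
  have hLpos : 0 < ‖g‖ := norm_pos_iff.mpr h0
  set L : ℝ := ‖g‖ with hLdef
  -- the fderiv acts as inner product with g
  have hdiff : DifferentiableAt ℝ φ x₀ := (hφ.differentiable (by simp)) x₀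
  have hfapp : ∀ w, fderiv ℝ φ x₀ w = ⟪g, w⟫ := by
    intro w
    have : (InnerProductSpace.toDual ℝ (Euc (d+2))) g = fderiv ℝ φ x₀ := by
      rw [hgdef]
      exact (InnerProductSpace.toDual ℝ (Euc (d+2))).apply_symm_apply _
    rw [← this, InnerProductSpace.toDual_apply_apply]
  clear_value g L
  -- Taylor bound
  obtain ⟨K, hK, ρ₁, hρ₁, htay⟩ := taylor_quad φ hφ x₀
  have htaylow : ∀ y ∈ closedBall x₀ ρ₁, ⟪g, y - x₀⟫ - K * ‖y - x₀‖ ^ 2 ≤ φ y := by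
    intro y hy
    have h1 := htay y hy
    rw [htouch₂, sub_zero, hfapp] at h1
    have := abs_le.mp (by rwa [Real.norm_eq_abs] at h1)
    linarith [this.1]
  -- neighborhoods
  obtain ⟨ρ₂, hρ₂, htch⟩ := Metric.eventually_nhds_iff_ball.mp htouch₃
  obtain ⟨ρ₃, hρ₃, hb3⟩ := Metric.mem_nhds_iff.mp (isOpen_ball.mem_nhds hx₀.2)
  set ρ : ℝ := min ρ₁ (min ρ₂ ρ₃ / 2) with hρdef
  have hρ : 0 < ρ := lt_min hρ₁ (by positivity)
  have hρ2 : ρ < ρ₂ := lt_of_le_of_lt (min_le_right _ _)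
    (by have := min_le_left ρ₂ ρ₃; linarith)
  have hρ3 : ρ < ρ₃ := lt_of_le_of_lt (min_le_right _ _)
    (by have := min_le_right ρ₂ ρ₃; linarith)
  have hρ1 : ρ ≤ ρ₁ := min_le_left _ _
  clear_value ρ
  -- radius of tangent ball
  set r : ℝ := min (ρ / 2) (L / (4 * K)) with hrdef
  have hr : 0 < r := lt_min (by positivity) (by positivity)
  have hr2ρ : 2 * r ≤ ρ := by
    have := min_le_left (ρ / 2) (L / (4 * K)); linarith
  have hrL : 4 * K * r ≤ L := by
    have h1 : r ≤ L / (4 * K) := min_le_right _ _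
    have h2 : (0:ℝ) < 4 * K := by positivity
    calc 4 * K * r ≤ 4 * K * (L / (4 * K)) := by nlinarith
      _ = L := by field_simp
  clear_value r
  set ν' : Euc (d+2) := L⁻¹ • g with hν'def
  have hν' : ‖ν'‖ = 1 := by
    rw [hν'def, norm_smul, norm_inv, Real.norm_eq_abs, abs_of_pos hLpos, ← hLdef]
    exact inv_mul_cancel₀ hLpos.ne'
  have hgLν : g = L • ν' := by
    rw [hν'def, smul_smul, mul_inv_cancel₀ (ne_of_gt hLpos), one_smul]
  set y₀ : Euc (d+2) := x₀ + r • ν' with hy₀def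
  have hrν : ‖r • ν'‖ = r := by
    rw [norm_smul, Real.norm_eq_abs, abs_of_pos hr, hν', mul_one]
  clear_value ν' y₀
  -- positivity of φ on the closed ball minus x₀
  have hpos : ∀ x : Euc (d+2), dist x y₀ ≤ r → x ≠ x₀ → 0 < φ x ∧ ‖x - x₀‖ ≤ 2 * r := by
    intro x hx hne
    set w : Euc (d+2) := x - x₀ with hwdef
    clear_value w
    have hwy : x - y₀ = w - r • ν' := by rw [hy₀def, hwdef]; abel
    have hdist : ‖w - r • ν'‖ ≤ r := by rw [← hwy, ← dist_eq_norm]; exact hx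
    have hs2r : ‖w‖ ≤ 2 * r := by
      calc ‖w‖ = ‖(w - r • ν') + r • ν'‖ := by
            congr 1
            abel
        _ ≤ ‖w - r • ν'‖ + ‖r • ν'‖ := norm_add_le _ _
        _ ≤ r + r := by rw [hrν]; linarith
        _ = 2 * r := by ring
    refine ⟨?_, hs2r⟩
    have hsq : ‖w‖ ^ 2 - 2 * (r * ⟪w, ν'⟫) + r ^ 2 ≤ r ^ 2 := by
      have h1 : ‖w - r • ν'‖ ^ 2 ≤ r ^ 2 := by
        have := norm_nonneg (w - r • ν'); nlinarith
      rw [norm_sub_sq_real, real_inner_smul_right, hrν] at h1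
      linarith
    set h : ℝ := ⟪w, ν'⟫ with hhdef
    clear_value h
    have hs2rh : ‖w‖ ^ 2 ≤ 2 * r * h := by linarith
    have hspos : 0 < ‖w‖ := by
      rw [norm_pos_iff, hwdef, sub_ne_zero]; exact hne
    have hhpos : 0 < h := by nlinarith [pow_pos hspos 2]
    have hinner : ⟪g, w⟫ = L * h := by
      rw [hgLν, real_inner_smul_left, hhdef, real_inner_comm]
    have hmem : x ∈ closedBall x₀ ρ₁ := by
      rw [mem_closedBall, dist_eq_norm, ← hwdef]; calc ‖w‖ ≤ 2 * r := hs2r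
        _ ≤ ρ := hr2ρ
        _ ≤ ρ₁ := hρ1
    have hφx := htaylow x hmem
    rw [← hwdef, hinner] at hφx
    have h4 : 4 * K * r * h ≤ L * h := mul_le_mul_of_nonneg_right hrL (le_of_lt hhpos)
    have h5 : K * ‖w‖ ^ 2 ≤ K * (2 * r * h) := mul_le_mul_of_nonneg_left hs2rh (le_of_lt hK)
    have h6 : 0 < K * ‖w‖ ^ 2 := by positivity
    linarith
  -- points of the closed tangent ball (other than x₀) are in Ω
  have hmemΩ : ∀ x : Euc (d+2), dist x y₀ ≤ r → x ≠ x₀ → x ∈ Ω := by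
    intro x hx hne
    obtain ⟨hφx, hs2r⟩ := hpos x hx hne
    have hxρ : dist x x₀ < ρ₂ := by
      rw [dist_eq_norm]
      calc ‖x - x₀‖ ≤ 2 * r := hs2r
        _ ≤ ρ := hr2ρ
        _ < ρ₂ := hρ2
    have hx1 : x ∈ ball (0 : Euc (d+2)) 1 := by
      apply hb3
      rw [mem_ball, dist_eq_norm]
      calc ‖x - x₀‖ ≤ 2 * r := hs2r
        _ ≤ ρ := hr2ρ
        _ < ρ₃ := hρ3
    have hle := htch x (mem_ball.mpr hxρ)
    have hsq : 0 < Real.sqrt (u x * v x) :=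
      lt_of_lt_of_le (lt_of_lt_of_le hφx (le_max_left _ _)) hle
    have huv : 0 < u x * v x := Real.sqrt_pos.mp hsq
    have hux : 0 < u x := by
      rcases (hu0 x hx1).lt_or_eq with h | h
      · exact h
      · exfalso; rw [← h] at huv; simp at huv
    rw [hΩu]; exact ⟨hx1, hux⟩
  have hΩopen : IsOpen Ω := by
    have hΩeq : Ω = ball (0 : Euc (d+2)) 1 ∩ u ⁻¹' (Ioi 0) := by
      rw [hΩu]; ext x; simp [mem_setOf_eq]
    rw [hΩeq]
    exact hu.isOpen_inter_preimage isOpen_ball isOpen_Ioi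
  have hx₀sphere : x₀ ∈ sphere y₀ r := by
    rw [mem_sphere, hy₀def, dist_eq_norm]
    simp only [sub_add_cancel_left, norm_neg]
    exact hrν
  have htang : OneSidedTangentBall Ω x₀ := by
    refine ⟨r, hr, y₀, Or.inl ⟨?_, ?_⟩⟩
    · intro x hx
      have hne : x ≠ x₀ := by
        rintro rfl
        rw [mem_ball] at hx
        exact absurd (mem_sphere.mp hx₀sphere) (ne_of_lt hx)
      exact hmemΩ x (le_of_lt (mem_ball.mp hx)) hne
    · apply Subset.antisymm
      · rintro x ⟨hxs, hxf⟩
        by_contra hne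
        rw [mem_singleton_iff] at hne
        have hxΩ := hmemΩ x (le_of_eq (mem_sphere.mp hxs)) hne
        have : x ∉ frontier Ω := by
          rw [hΩopen.frontier_eq]
          exact fun h => h.2 hxΩ
        exact this hxf
      · rintro x hx
        rw [mem_singleton_iff] at hx
        subst hx
        exact ⟨hx₀sphere, hx₀.1⟩
  -- blow-up
  obtain ⟨rs, _, hrsp, hrs0, α, hα, β, hβ, hαβ, ν, hν, hU, hV⟩ := hbc x₀ hx₀ htang
  simp only at hαβ
  set p : Euc (d+2) := (2⁻¹ * L⁻¹) • g with hpdef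
  have hpnorm : ‖p‖ = 2⁻¹ := by
    rw [hpdef, norm_smul, Real.norm_eq_abs, abs_of_pos (by positivity), ← hLdef,
      mul_assoc, inv_mul_cancel₀ hLpos.ne', mul_one]
  have hpball : p ∈ ball (0 : Euc (d+2)) 1 := by
    rw [mem_ball, dist_zero_right, hpnorm]; norm_num
  have hgp : ⟪g, p⟫ = L / 2 := by
    rw [hpdef, real_inner_smul_right, real_inner_self_eq_norm_sq, ← hLdef]
    field_simp
  clear_value p
  set yk : ℕ → Euc (d+2) := fun k => x₀ + rs k • p with hykdef
  have hyk : Tendsto yk atTop (𝓝 x₀) := by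
    have h1 : Tendsto (fun k => rs k • p) atTop (𝓝 ((0:ℝ) • p)) :=
      hrs0.smul_const p
    rw [zero_smul] at h1
    have := tendsto_const_nhds.add h1 (f := fun _ : ℕ => x₀) (x := atTop)
    simpa using this
  -- φ directional limit
  have hC : Tendsto (fun k => φ (yk k) / rs k) atTop (𝓝 (L / 2)) := by
    have hline : HasDerivAt (fun t : ℝ => x₀ + t • p) p 0 := by
      have h1 : HasDerivAt (fun t : ℝ => t • p) ((1:ℝ) • p) 0 :=
        (hasDerivAt_id 0).smul_const p
      rw [one_smul] at h1
      exact h1.const_add x₀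
    have hψ : HasDerivAt (fun t : ℝ => φ (x₀ + t • p)) (L / 2) 0 := by
      have h2 : HasFDerivAt φ (fderiv ℝ φ x₀) (x₀ + (0:ℝ) • p) := by
        simpa using hdiff.hasFDerivAt
      have h3 := h2.comp_hasDerivAt 0 hline
      rwa [hfapp, hgp] at h3
    have hslope := hasDerivAt_iff_tendsto_slope.mp hψ
    have hrs' : Tendsto rs atTop (𝓝[≠] (0:ℝ)) := by
      rw [tendsto_nhdsWithin_iff]
      exact ⟨hrs0, Eventually.of_forall fun k => (hrsp k).ne'⟩
    have := hslope.comp hrs'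
    apply this.congr
    intro k
    simp only [Function.comp_apply, slope_def_field]
    rw [hykdef]
    simp [htouch₂, div_eq_inv_mul]
  -- u, v limits
  have hA := hU.tendsto_at hpball
  have hB := hV.tendsto_at hpball
  set m : ℝ := max ⟪p, ν⟫ 0 with hmdef
  have hm0 : 0 ≤ m := hmdef ▸ le_max_right _ _
  have hAB : Tendsto (fun k => Real.sqrt ((u (yk k) / rs k) * (v (yk k) / rs k)))
      atTop (𝓝 m) := by
    have h1 : Tendsto (fun k => (u (yk k) / rs k) * (v (yk k) / rs k)) atTop
        (𝓝 ((α * m) * (β * m))) := hA.mul hB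
    have h2 := (Real.continuous_sqrt.tendsto _).comp h1
    have h3 : Real.sqrt ((α * m) * (β * m)) = m := by
      have h4 : (α * m) * (β * m) = (α * β) * m ^ 2 := by ring
      rw [h4, hαβ, one_mul, Real.sqrt_sq hm0]
    rwa [h3] at h2
  -- eventual inequality
  have hEv : ∀ᶠ k in atTop, max (φ (yk k) / rs k) 0 ≤
      Real.sqrt ((u (yk k) / rs k) * (v (yk k) / rs k)) := by
    have h1 : ∀ᶠ k in atTop, yk k ∈ ball x₀ ρ₂ := hyk (ball_mem_nhds _ hρ₂)
    have h2 : ∀ᶠ k in atTop, yk k ∈ ball (0 : Euc (d+2)) 1 :=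
      hyk (isOpen_ball.mem_nhds hx₀.2)
    filter_upwards [h1, h2] with k hk1 hk2
    have hle := htch (yk k) hk1
    have hrk : 0 < rs k := hrsp k
    have huvk : 0 ≤ u (yk k) * v (yk k) := mul_nonneg (hu0 _ hk2) (hv0 _ hk2)
    have heq : Real.sqrt ((u (yk k) / rs k) * (v (yk k) / rs k)) =
        Real.sqrt (u (yk k) * v (yk k)) / rs k := by
      rw [div_mul_div_comm, Real.sqrt_div huvk, Real.sqrt_mul_self hrk.le]
    rw [heq]
    have hmax : max (φ (yk k) / rs k) 0 = max (φ (yk k)) 0 / rs k := by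
      rcases le_total (φ (yk k)) 0 with h | h
      · rw [max_eq_right h, max_eq_right (div_nonpos_of_nonpos_of_nonneg h hrk.le),
          zero_div]
      · rw [max_eq_left h, max_eq_left (div_nonneg h hrk.le)]
    rw [hmax]
    exact (div_le_div_iff_of_pos_right hrk).mpr hle
  have hCmax : Tendsto (fun k => max (φ (yk k) / rs k) 0) atTop (𝓝 (max (L/2) 0)) :=
    hC.max tendsto_const_nhds
  have hfinal : max (L/2) 0 ≤ m := le_of_tendsto_of_tendsto hCmax hAB hEv
  have hm12 : m ≤ 2⁻¹ := by
    refine max_le ?_ (by norm_num)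
    calc ⟪p, ν⟫ ≤ ‖p‖ * ‖ν‖ := real_inner_le_norm _ _
      _ = 2⁻¹ := by rw [hpnorm, hν, mul_one]
  have hL2 : L / 2 ≤ 2⁻¹ := le_trans (le_max_left _ _) (hfinal.trans hm12)
  linarith
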